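/- Let X be a compact metric space and f : X → X an equicontinuous continuous map. Then Ω(x, f^n) = ω(x, f^n) for all x ∈ X and all n ≥ 1. -/

import Mathlib

/-!
Equicontinuity of the iterates makes `f^[m] xᵢ` and `f^[m] x` uniformly close in `m` once `xᵢ`
is close to `x`, so every prolongational limit of `x` is already a limit along the orbit of `x`.
Equicontinuity of `f` passes to `f^[n]`, whose iterates are among those of `f`.
-/

open Filter Topology Set

/-- The omega-limit set ω(x,f): points y with f^[nᵢ] x → y for some strictly
increasing sequence (nᵢ). -/
def omegaLimitPts {X : Type*} [TopologicalSpace X] (f : X → X) (x : X) : Set X :=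
  {y | ∃ n : ℕ → ℕ, StrictMono n ∧ Tendsto (fun i => f^[n i] x) atTop (𝓝 y)}

/-- The prolongational limit set Ω(x,f): points y with f^[nᵢ] xᵢ → y for some
sequence xᵢ → x and strictly increasing (nᵢ). -/
def prolongPts {X : Type*} [TopologicalSpace X] (f : X → X) (x : X) : Set X :=
  {y | ∃ (xs : ℕ → X) (n : ℕ → ℕ), StrictMono n ∧ Tendsto xs atTop (𝓝 x) ∧
        Tendsto (fun i => f^[n i] (xs i)) atTop (𝓝 y)}

/-- f is equicontinuous: the family of iterates {fⁿ} is (uniformly) equicontinuous. -/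
def EquicontinuousMap {X : Type*} [MetricSpace X] (f : X → X) : Prop :=
  ∀ ε > (0:ℝ), ∃ δ > (0:ℝ), ∀ x y : X, dist x y < δ → ∀ n : ℕ,
    dist (f^[n] x) (f^[n] y) < ε

/-- Continuity of the map ω_f : x ↦ ω(x,f) with respect to the Hausdorff metric. -/
def OmegaMapContinuous {X : Type*} [MetricSpace X] (f : X → X) : Prop :=
  ∀ x₀ : X, ∀ ε > (0:ℝ), ∃ δ > (0:ℝ), ∀ x : X, dist x x₀ < δ →
    Metric.hausdorffDist (omegaLimitPts f x) (omegaLimitPts f x₀) < ε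

/-- p is an end point: every open set containing p contains an open set V ∋ p
whose boundary is a single point. -/
def IsEndpoint {X : Type*} [TopologicalSpace X] (p : X) : Prop :=
  ∀ U : Set X, IsOpen U → p ∈ U →
    ∃ V : Set X, IsOpen V ∧ p ∈ V ∧ V ⊆ U ∧ ∃ b : X, frontier V = {b}

/-- X contains no simple closed curve: no subspace homeomorphic to the circle. -/
def NoSimpleClosedCurve (X : Type*) [TopologicalSpace X] : Prop :=
  ∀ s : Set X, ¬ Nonempty (s ≃ₜ Circle)

theorem omegaLimitPts_subset_prolongPts {X : Type*} [TopologicalSpace X] (f : X → X) (x : X) :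
    omegaLimitPts f x ⊆ prolongPts f x :=
  fun _ ⟨m, hm, hy⟩ => ⟨fun _ => x, m, hm, tendsto_const_nhds, hy⟩

namespace EquicontinuousMap

variable {X : Type*} [MetricSpace X] {f : X → X}

theorem iterate (hf : EquicontinuousMap f) (n : ℕ) : EquicontinuousMap f^[n] := by
  intro ε hε
  obtain ⟨δ, hδ, hclose⟩ := hf ε hε
  exact ⟨δ, hδ, fun x y hxy m => by
    simpa only [← Function.iterate_mul] using hclose x y hxy (n * m)⟩

theorem tendsto_dist_iterate {ι : Type*} {l : Filter ι} (hf : EquicontinuousMap f) {x : X}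
    {xs : ι → X} (hxs : Tendsto xs l (𝓝 x)) (m : ι → ℕ) :
    Tendsto (fun i => dist (f^[m i] (xs i)) (f^[m i] x)) l (𝓝 0) := by
  refine Metric.tendsto_nhds.2 fun ε hε => ?_
  obtain ⟨δ, hδ, hclose⟩ := hf ε hε
  filter_upwards [Metric.tendsto_nhds.1 hxs δ hδ] with i hi
  simpa only [Real.dist_0_eq_abs, abs_dist] using hclose (xs i) x hi (m i)

theorem prolongPts_subset_omegaLimitPts (hf : EquicontinuousMap f) (x : X) :
    prolongPts f x ⊆ omegaLimitPts f x := by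
  rintro y ⟨xs, m, hm, hxs, hy⟩
  exact ⟨m, hm, hy.congr_dist (hf.tendsto_dist_iterate hxs m)⟩

theorem prolongPts_eq_omegaLimitPts (hf : EquicontinuousMap f) (x : X) :
    prolongPts f x = omegaLimitPts f x :=
  (hf.prolongPts_subset_omegaLimitPts x).antisymm (omegaLimitPts_subset_prolongPts f x)

end EquicontinuousMap

theorem prolong_eq_omega_iterate_of_equicontinuous_general {X : Type*} [MetricSpace X]
    (f : X → X) (heq : EquicontinuousMap f) :
    ∀ x : X, ∀ n : ℕ, 1 ≤ n → prolongPts (f^[n]) x = omegaLimitPts (f^[n]) x :=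
  fun x n _ => (heq.iterate n).prolongPts_eq_omegaLimitPts x

/-- If f is equicontinuous, then Ω(x,fⁿ) = ω(x,fⁿ) for all x and n ≥ 1. -/
theorem prolong_eq_omega_iterate_of_equicontinuous {X : Type*} [MetricSpace X]
    [CompactSpace X] (f : X → X) (hf : Continuous f)
    (heq : EquicontinuousMap f) :
    ∀ x : X, ∀ n : ℕ, 1 ≤ n → prolongPts (f^[n]) x = omegaLimitPts (f^[n]) x :=
  prolong_eq_omega_iterate_of_equicontinuous_general f heq
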